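/- arXiv:1810.03027 — 12 statements merged into one kernel-verified Lean document; each statement's English description precedes it below -/
import Mathlib

section
/- Let B = (X, ⊳, ⊲) be a biquandle. Then the underlying quandle operation x * y = β_y^{-1}(x ⊳ y), where β_y(x) = x ⊲ y, makes X a quandle: x * x = x for all x ∈ X, for each y ∈ X the map x ↦ x * y is a bijection of X, and (x * y) * z = (x * z) * (y * z) for all x, y, z ∈ X. -/
/-- A quandle structure on a type, given by its binary operation. -/
structure IsQuandle {Q : Type*} (op : Q → Q → Q) : Prop where
  idem : ∀ x, op x x = x
  right_bij : ∀ y, Function.Bijective (fun x => op x y)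
  self_distrib : ∀ x y z, op (op x y) z = op (op x z) (op y z)

/-- A biquandle structure on a type, given by its two binary operations
`ub` (`x ⊳ y`) and `ob` (`x ⊲ y`). -/
structure IsBiquandle {B : Type*} (ub ob : B → B → B) : Prop where
  diag : ∀ x, ub x x = ob x x
  alpha_bij : ∀ y, Function.Bijective (fun x => ub x y)
  beta_bij : ∀ y, Function.Bijective (fun x => ob x y)
  S_bij : Function.Bijective (fun p : B × B => (ob p.2 p.1, ub p.1 p.2))
  exchange₁ : ∀ x y z, ub (ub x y) (ub z y) = ub (ub x z) (ob y z)
  exchange₂ : ∀ x y z, ob (ub x y) (ub z y) = ub (ob x z) (ob y z)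
  exchange₃ : ∀ x y z, ob (ob x y) (ob z y) = ob (ob x z) (ub y z)

/-!
Every `β_y` is injective, so `u = v * w` is equivalent to `u ⊲ w = v ⊳ w`. Idempotency and right
bijectivity of `*` thereby reduce to `x ⊳ x = x ⊲ x` and to the bijectivity of `α_y`. For
self-distributivity, with `a = x * y`, `b = y * z`, `c = x * z`, apply `β_b` and then `β_{z ⊳ b}`
to `a * z = c * b`; the exchange laws and `(p * q) ⊲ q = p ⊳ q` rewrite both sides down to the two
sides of the first exchange law `(x ⊳ y) ⊳ (z ⊲ y) = (x ⊳ z) ⊳ (y ⊳ z)`.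
-/

namespace IsBiquandle

variable {X : Type*} {ub ob : X → X → X} (hB : IsBiquandle ub ob)
  {star : X → X → X} (hstar : ∀ x y, ob (star x y) y = ub x y)

include hB hstar

theorem eq_star_iff {w x y : X} : w = star x y ↔ ob w y = ub x y := by
  rw [← hstar x y]
  exact (hB.beta_bij y).1.eq_iff.symm

theorem star_self (x : X) : star x x = x :=
  ((hB.eq_star_iff hstar).2 (hB.diag x).symm).symm

theorem star_right_injective (y : X) : Function.Injective (fun x => star x y) := by
  intro x₁ x₂ h
  apply (hB.alpha_bij y).1
  simp only [← hstar, h]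

theorem star_right_surjective (y : X) : Function.Surjective (fun x => star x y) := by
  intro w
  obtain ⟨x, hx⟩ := (hB.alpha_bij y).2 (ob w y)
  exact ⟨x, ((hB.eq_star_iff hstar).2 hx.symm).symm⟩

theorem star_self_distrib (x y z : X) :
    star (star x y) z = star (star x z) (star y z) := by
  set a := star x y
  set b := star y z
  set c := star x z
  rw [hB.eq_star_iff hstar]
  apply (hB.beta_bij (ub z b)).1
  calc ob (ob (star a z) b) (ub z b) = ob (ob (star a z) z) (ob b z) := (hB.exchange₃ _ z b).symm
    _ = ob (ub a z) (ub y z) := by rw [hstar, hstar]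
    _ = ub (ob a y) (ob z y) := hB.exchange₂ a z y
    _ = ub (ub x y) (ob z y) := by rw [hstar]
    _ = ub (ub x z) (ub y z) := (hB.exchange₁ x z y).symm
    _ = ub (ob c z) (ob b z) := by rw [hstar, hstar]
    _ = ob (ub c b) (ub z b) := (hB.exchange₂ c b z).symm

end IsBiquandle

/-- If `(X, ⊳, ⊲)` is a biquandle and `*` is the operation determined by
`β_y(x * y) = x ⊳ y` (i.e. `x * y = β_y⁻¹(x ⊳ y)`, where `β_y(x) = x ⊲ y`),
then `(X, *)` is a quandle. -/
theorem underlying_quandle_isQuandle {X : Type*} (ub ob : X → X → X)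
    (hB : IsBiquandle ub ob) (star : X → X → X)
    (hstar : ∀ x y, ob (star x y) y = ub x y) :
    IsQuandle star :=
  ⟨hB.star_self hstar,
    fun y => ⟨hB.star_right_injective hstar y, hB.star_right_surjective hstar y⟩,
    hB.star_self_distrib hstar⟩
end

section
/- Let {β_y : y ∈ X} be a biquandle structure on a quandle Q = (X, *). Define x ⊳ y = β_y(x * y) and x ⊲ y = β_y(x) for all x, y ∈ X. Then (X, ⊳, ⊲) is a biquandle, and its underlying quandle operation coincides with *, i.e. β_y^{-1}(x ⊳ y) = x * y for all x, y ∈ X. -/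
/-- A biquandle structure on the quandle `(X, op)`: a family `β` of quandle
automorphisms such that `β_{β_y(x*y)} ∘ β_y = β_{β_x(y)} ∘ β_x` and
`y ↦ β_y(y)` is a bijection. -/
structure IsBiquandleStructure {X : Type*} (op : X → X → X) (β : X → X → X) : Prop where
  beta_bij : ∀ y, Function.Bijective (β y)
  beta_hom : ∀ y x z, β y (op x z) = op (β y x) (β y z)
  compat : ∀ x y a, β (β y (op x y)) (β y a) = β (β x y) (β x a)
  diag_bij : Function.Bijective (fun y => β y y)

/-!
The map `S(x, y) = (β_x y, β_y (x * y))` satisfies `β_v (β_y y) = β_u u` for `(u, v) = S(x, y)`: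
this is the compatibility condition at `a = y`. Since `y ↦ β_y y` and every `β_v` are bijective,
`y`, and then `x`, can be recovered from `(u, v)`, so `S` is a bijection. The exchange laws are the
compatibility condition combined with the fact that each `β_y` is a quandle homomorphism (and, for
the first law, right self-distributivity of `*`).
-/

namespace IsBiquandleStructure

variable {X : Type*} {op β : X → X → X}

theorem beta_beta_diag (hβ : IsBiquandleStructure op β) (x y : X) :
    β (β y (op x y)) (β y y) = β (β x y) (β x y) :=
  hβ.compat x y y

theorem injective_switch (hQ : IsQuandle op) (hβ : IsBiquandleStructure op β) :
    Function.Injective (fun p : X × X => (β p.1 p.2, β p.2 (op p.1 p.2))) := by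
  rintro ⟨x, y⟩ ⟨x', y'⟩ h
  obtain ⟨hu, hv⟩ := Prod.mk.inj h
  have hdiag : β y y = β y' y' := by
    apply (hβ.beta_bij (β y' (op x' y'))).1
    rw [← hv, hβ.beta_beta_diag, hu, hv, hβ.beta_beta_diag]
  obtain rfl : y = y' := hβ.diag_bij.1 hdiag
  obtain rfl : x = x' := (hQ.right_bij y).1 ((hβ.beta_bij y).1 hv)
  rfl

theorem surjective_switch (hQ : IsQuandle op) (hβ : IsBiquandleStructure op β) :
    Function.Surjective (fun p : X × X => (β p.1 p.2, β p.2 (op p.1 p.2))) := by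
  rintro ⟨u, v⟩
  obtain ⟨d, hd⟩ := (hβ.beta_bij v).2 (β u u)
  obtain ⟨y, rfl⟩ := hβ.diag_bij.2 d
  obtain ⟨w, rfl⟩ := (hβ.beta_bij y).2 v
  obtain ⟨x, rfl⟩ := (hQ.right_bij y).2 w
  have hu : β x y = u := hβ.diag_bij.1 ((hβ.beta_beta_diag x y).symm.trans hd)
  exact ⟨(x, y), by simp only [hu]⟩

theorem exchange_ub_ub (hQ : IsQuandle op) (hβ : IsBiquandleStructure op β) (x y z : X) :
    β (β y (op z y)) (op (β y (op x y)) (β y (op z y))) =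
      β (β z y) (op (β z (op x z)) (β z y)) := by
  rw [← hβ.beta_hom, ← hβ.beta_hom, hβ.compat z y, ← hQ.self_distrib x z y]

theorem exchange_ob_ub (hβ : IsBiquandleStructure op β) (x y z : X) :
    β (β y (op z y)) (β y (op x y)) = β (β z y) (op (β z x) (β z y)) := by
  rw [hβ.compat z y, hβ.beta_hom]

end IsBiquandleStructure

/-- Given a biquandle structure `β` on a quandle `(X, *)`, the operations
`x ⊳ y = β_y(x * y)` and `x ⊲ y = β_y(x)` make `X` a biquandle, and its
underlying quandle operation coincides with `*`, i.e.
`β_y⁻¹(x ⊳ y) = x * y` for all `x, y`. -/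
theorem biquandle_of_biquandleStructure {X : Type*} (op : X → X → X) (β : X → X → X)
    (hQ : IsQuandle op) (hβ : IsBiquandleStructure op β) :
    IsBiquandle (fun x y => β y (op x y)) (fun x y => β y x) ∧
    ∀ star : X → X → X, (∀ x y, β y (star x y) = β y (op x y)) → star = op := by
  exact ⟨⟨fun x => congrArg (β x) (hQ.idem x), fun y => (hβ.beta_bij y).comp (hQ.right_bij y),
    hβ.beta_bij, ⟨hβ.injective_switch hQ, hβ.surjective_switch hQ⟩, hβ.exchange_ub_ub hQ,
    hβ.exchange_ob_ub, fun x y z => (hβ.compat y z x).symm⟩,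
    fun _ h => funext₂ fun x y => (hβ.beta_bij y).1 (h x y)⟩
end

section
/- Let B = (X, ⊳, ⊲) be a biquandle with underlying quandle Q(B) = (X, *), and for y ∈ X let β_y(x) = x ⊲ y. Then the family {β_y : y ∈ X} is a biquandle structure on Q(B): each β_y is a quandle automorphism of (X, *), the identity β_{β_y(x*y)} ∘ β_y = β_{β_x(y)} ∘ β_x holds for all x, y ∈ X, and the map y ↦ β_y(y) is a bijection of X. Moreover x ⊳ y = β_y(x * y) for all x, y ∈ X. -/
/-!
Writing `x ⊳ y = β_y (x * y)`, each axiom of a biquandle structure is a biquandle axiom in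
disguise: `β_y` respects `*` by the second and third exchange laws, the compatibility identity
is the third exchange law, and `y ↦ y ⊲ y` is bijective because `S (y, y) = (y ⊲ y, y ⊲ y)`
while, by the second exchange law, any preimage `(a, b)` of `(x, x)` under `S` has `x = a ⊲ a`.
-/

namespace IsBiquandle

variable {X : Type*} {ub ob : X → X → X}

theorem diag_injective (hB : IsBiquandle ub ob) : Function.Injective fun y => ob y y := by
  intro y z (h : ob y y = ob z z)
  have hS : (ob y y, ub y y) = (ob z z, ub z z) := by
    rw [hB.diag, hB.diag, h]
  exact congrArg Prod.fst (@hB.S_bij.1 (y, y) (z, z) hS)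

theorem diag_surjective (hB : IsBiquandle ub ob) : Function.Surjective fun y => ob y y := by
  intro x
  obtain ⟨⟨a, b⟩, hab⟩ := hB.S_bij.2 (x, x)
  obtain ⟨hba, hab⟩ := Prod.mk.inj hab
  have hx : ub x x = ub (ob a a) x := by
    simpa only [hab, hba, ← hB.diag] using hB.exchange₂ a b a
  exact ⟨a, ((hB.alpha_bij x).1 hx).symm⟩

theorem diag_bijective (hB : IsBiquandle ub ob) : Function.Bijective fun y => ob y y :=
  ⟨hB.diag_injective, hB.diag_surjective⟩

theorem ob_star (hB : IsBiquandle ub ob) {star : X → X → X}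
    (hstar : ∀ x y, ob (star x y) y = ub x y) (x y z : X) :
    ob (star x z) y = star (ob x y) (ob z y) := by
  apply (hB.beta_bij (ob z y)).1
  change ob (ob (star x z) y) (ob z y) = ob (star (ob x y) (ob z y)) (ob z y)
  rw [hstar, hB.exchange₃, hstar, hB.exchange₂]

end IsBiquandle

/-- Let `(X, ⊳, ⊲)` be a biquandle with underlying quandle operation `star`
(determined by `(x * y) ⊲ y = x ⊳ y`, i.e. `x * y = β_y⁻¹(x ⊳ y)` where
`β_y(x) = x ⊲ y`). Then the family `β_y` is a biquandle structure on the
underlying quandle, and moreover `x ⊳ y = β_y(x * y)` for all `x, y`. -/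
theorem biquandleStructure_of_biquandle {X : Type*} (ub ob : X → X → X)
    (hB : IsBiquandle ub ob) (star : X → X → X)
    (hstar : ∀ x y, ob (star x y) y = ub x y) :
    IsBiquandleStructure star (fun y x => ob x y) ∧
    ∀ x y, ub x y = ob (star x y) y := by
  have compat : ∀ x y a, ob (ob a y) (ob (star x y) y) = ob (ob a x) (ob y x) := by
    intro x y a
    rw [hstar]
    exact (hB.exchange₃ a x y).symm
  exact ⟨⟨hB.beta_bij, fun y x z => hB.ob_star hstar x y z, compat, hB.diag_bijective⟩,
    fun x y => (hstar x y).symm⟩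
end

section
/- Let Q₁ = (X₁, *₁) and Q₂ = (X₂, *₂) be quandles, let {β¹_y : y ∈ X₁} be a biquandle structure on Q₁ and {β²_y : y ∈ X₂} a biquandle structure on Q₂, and let B₁, B₂ be the biquandles they define. Then B₁ and B₂ are isomorphic as biquandles if and only if there exists a quandle isomorphism F : Q₁ → Q₂ such that F ∘ β¹_y = β²_{F(y)} ∘ F for every y ∈ X₁. -/
theorem map_beta_eq_iff {X₁ X₂ : Type*} {β₁ : X₁ → X₁ → X₁} {β₂ : X₂ → X₂ → X₂}
    {F : X₁ → X₂} (hβ₂ : ∀ y, Function.Injective (β₂ y))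
    (hF : ∀ x y, F (β₁ y x) = β₂ (F y) (F x)) (y a : X₁) (b : X₂) :
    F (β₁ y a) = β₂ (F y) b ↔ F a = b := by
  rw [hF]
  exact (hβ₂ (F y)).eq_iff

theorem biquandleStructure_iso_iff_general {X₁ X₂ : Type*}
    (op₁ : X₁ → X₁ → X₁) (op₂ : X₂ → X₂ → X₂) (β₁ : X₁ → X₁ → X₁) (β₂ : X₂ → X₂ → X₂)
    (hβ₂ : IsBiquandleStructure op₂ β₂) :
    (∃ F : X₁ → X₂, Function.Bijective F ∧
        (∀ x y, F (β₁ y (op₁ x y)) = β₂ (F y) (op₂ (F x) (F y))) ∧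
        (∀ x y, F (β₁ y x) = β₂ (F y) (F x))) ↔
    (∃ F : X₁ → X₂, Function.Bijective F ∧
        (∀ x y, F (op₁ x y) = op₂ (F x) (F y)) ∧
        (∀ y, F ∘ β₁ y = β₂ (F y) ∘ F)) := by
  refine exists_congr fun F => and_congr_right fun _ => ?_
  have hcomm : (∀ y, F ∘ β₁ y = β₂ (F y) ∘ F) ↔ ∀ x y, F (β₁ y x) = β₂ (F y) (F x) := by
    simp only [funext_iff, Function.comp_apply]
    exact forall_comm
  rw [hcomm]
  refine and_congr_left fun hF => forall₂_congr fun x y => ?_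
  exact map_beta_eq_iff (fun y => (hβ₂.beta_bij y).injective) hF y (op₁ x y) (op₂ (F x) (F y))

/-- Let `B₁`, `B₂` be the biquandles defined by biquandle structures `β₁`, `β₂`
on quandles `(X₁, op₁)`, `(X₂, op₂)` — with operations
`x ⊳ᵢ y = βᵢ_y(x *ᵢ y)` and `x ⊲ᵢ y = βᵢ_y(x)`. Then `B₁ ≅ B₂` as biquandles
iff there is a quandle isomorphism `F : Q₁ → Q₂` with
`F ∘ β¹_y = β²_{F(y)} ∘ F` for every `y`. -/
theorem biquandleStructure_iso_iff {X₁ X₂ : Type*}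
    (op₁ : X₁ → X₁ → X₁) (op₂ : X₂ → X₂ → X₂) (β₁ : X₁ → X₁ → X₁) (β₂ : X₂ → X₂ → X₂)
    (hQ₁ : IsQuandle op₁) (hQ₂ : IsQuandle op₂)
    (hβ₁ : IsBiquandleStructure op₁ β₁) (hβ₂ : IsBiquandleStructure op₂ β₂) :
    (∃ F : X₁ → X₂, Function.Bijective F ∧
        (∀ x y, F (β₁ y (op₁ x y)) = β₂ (F y) (op₂ (F x) (F y))) ∧
        (∀ x y, F (β₁ y x) = β₂ (F y) (F x))) ↔
    (∃ F : X₁ → X₂, Function.Bijective F ∧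
        (∀ x y, F (op₁ x y) = op₂ (F x) (F y)) ∧
        (∀ y, F ∘ β₁ y = β₂ (F y) ∘ F)) :=
  biquandleStructure_iso_iff_general op₁ op₂ β₁ β₂ hβ₂
end

section
/- Let Q₁ = (X, *₁) and Q₂ = (Y, *₂) be quandles, let f be a quandle automorphism of Q₁ and g a quandle automorphism of Q₂, and let X_f and Y_g be the biquandles defined by the constant biquandle structures β_y = f (for all y ∈ X) and β_y = g (for all y ∈ Y). Then X_f and Y_g are isomorphic as biquandles if and only if there exists a quandle isomorphism F : Q₁ → Q₂ with F ∘ f = g ∘ F. -/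
open Function

theorem Function.Semiconj.map_comp_op_iff {X Y : Type*} {op₁ : X → X → X} {op₂ : Y → Y → Y}
    {F : X → Y} {f : X → X} {g : Y → Y} (hF : Semiconj F f g) (hg : Injective g) :
    (∀ x y, F (f (op₁ x y)) = g (op₂ (F x) (F y))) ↔ ∀ x y, F (op₁ x y) = op₂ (F x) (F y) := by
  simp only [hF.eq, hg.eq_iff]

theorem constant_structure_iso_iff_general {X Y : Type*}
    (op₁ : X → X → X) (op₂ : Y → Y → Y) (f : X → X) (g : Y → Y)
    (hg : Function.Bijective g ∧ ∀ x y, g (op₂ x y) = op₂ (g x) (g y)) :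
    (∃ F : X → Y, Function.Bijective F ∧
        (∀ x y, F (f (op₁ x y)) = g (op₂ (F x) (F y))) ∧
        (∀ x, F (f x) = g (F x))) ↔
    (∃ F : X → Y, Function.Bijective F ∧
        (∀ x y, F (op₁ x y) = op₂ (F x) (F y)) ∧
        F ∘ f = g ∘ F) := by
  refine exists_congr fun F => and_congr_right fun _ => ?_
  rw [← semiconj_iff_comp_eq]
  exact and_congr_left fun hF => Semiconj.map_comp_op_iff hF hg.1.injective

/-- Let `f`, `g` be quandle automorphisms of quandles `(X, op₁)`, `(Y, op₂)`,
and let `X_f`, `Y_g` be the biquandles defined by the constant biquandle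
structures `β_y = f` and `β_y = g` — with operations `x ⊳ y = f(x *₁ y)`,
`x ⊲ y = f(x)` on `X` and `x ⊳ y = g(x *₂ y)`, `x ⊲ y = g(x)` on `Y`.
Then `X_f ≅ Y_g` as biquandles iff there is a quandle isomorphism
`F : Q₁ → Q₂` with `F ∘ f = g ∘ F`. -/
theorem constant_structure_iso_iff {X Y : Type*}
    (op₁ : X → X → X) (op₂ : Y → Y → Y) (f : X → X) (g : Y → Y)
    (hQ₁ : IsQuandle op₁) (hQ₂ : IsQuandle op₂)
    (hf : Function.Bijective f ∧ ∀ x y, f (op₁ x y) = op₁ (f x) (f y))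
    (hg : Function.Bijective g ∧ ∀ x y, g (op₂ x y) = op₂ (g x) (g y)) :
    (∃ F : X → Y, Function.Bijective F ∧
        (∀ x y, F (f (op₁ x y)) = g (op₂ (F x) (F y))) ∧
        (∀ x, F (f x) = g (F x))) ↔
    (∃ F : X → Y, Function.Bijective F ∧
        (∀ x y, F (op₁ x y) = op₂ (F x) (F y)) ∧
        F ∘ f = g ∘ F) :=
  constant_structure_iso_iff_general op₁ op₂ f g hg
end

section
/- Let Q = (X, *) be a quandle and let f and g be quandle automorphisms of Q. Then the biquandles X_f and X_g defined by the constant biquandle structures f and g are isomorphic if and only if f and g are conjugate in the automorphism group Aut(Q); consequently the assignment f ↦ X_f induces a bijection between the conjugacy classes of Aut(Q) and the isomorphism classes of biquandles given by constant biquandle structures on Q. -/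
/-- `f` is a quandle automorphism of `(Q, op)`. -/
def IsQuandleAut {Q : Type*} (op : Q → Q → Q) (f : Q → Q) : Prop :=
  Function.Bijective f ∧ ∀ x y, f (op x y) = op (f x) (f y)

/-- `f` and `g` are conjugate in the automorphism group `Aut(Q)`:
there is an automorphism `h` with `h ∘ f = g ∘ h` (i.e. `h f h⁻¹ = g`). -/
def ConjugateAut {Q : Type*} (op : Q → Q → Q) (f g : Q → Q) : Prop :=
  ∃ h : Q → Q, IsQuandleAut op h ∧ h ∘ f = g ∘ h

/-- The biquandles `X_f` and `X_g` (with operations `x ⊳ y = f (x * y)`,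
`x ⊲ y = f x`, resp. for `g`) are isomorphic. -/
def ConstBiquandleIso {Q : Type*} (op : Q → Q → Q) (f g : Q → Q) : Prop :=
  ∃ F : Q → Q, Function.Bijective F ∧
    (∀ x y, F (f (op x y)) = g (op (F x) (F y))) ∧ (∀ x, F (f x) = g (F x))

/-!
Both an isomorphism `X_f ≅ X_g` and a conjugating automorphism are bijections `F` with
`F ∘ f = g ∘ F`. Given this intertwining, the remaining biquandle condition
`F (f (x * y)) = g (F x * F y)` reads `g (F (x * y)) = g (F x * F y)`, which, `g` being
injective, says exactly that `F` is a quandle homomorphism. So the two relations on `Aut(Q)`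
coincide, and so do their quotients.
-/

section

variable {Q : Type*} {op : Q → Q → Q} {f g : Q → Q}

theorem ConjugateAut.constBiquandleIso (h : ConjugateAut op f g) :
    ConstBiquandleIso op f g := by
  obtain ⟨F, ⟨hF_bij, hF_hom⟩, hF_comm⟩ := h
  have hF_comm' : ∀ x, F (f x) = g (F x) := congrFun hF_comm
  exact ⟨F, hF_bij, fun x y => by rw [hF_comm', hF_hom], hF_comm'⟩

theorem ConstBiquandleIso.conjugateAut (hg : Function.Injective g)
    (h : ConstBiquandleIso op f g) : ConjugateAut op f g := by
  obtain ⟨F, hF_bij, hF_op, hF_comm⟩ := h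
  exact ⟨F, ⟨hF_bij, fun x y => hg ((hF_comm _).symm.trans (hF_op x y))⟩, funext hF_comm⟩

theorem constBiquandleIso_iff_conjugateAut (hg : Function.Injective g) :
    ConstBiquandleIso op f g ↔ ConjugateAut op f g :=
  ⟨ConstBiquandleIso.conjugateAut hg, ConjugateAut.constBiquandleIso⟩

end

theorem constant_structures_conjugacy_general {Q : Type*} (op : Q → Q → Q) :
    (∀ f g : {f : Q → Q // IsQuandleAut op f},
        ConstBiquandleIso op f.1 g.1 ↔ ConjugateAut op f.1 g.1) ∧
    ∃ e : Quot (fun f g : {f : Q → Q // IsQuandleAut op f} => ConjugateAut op f.1 g.1) ≃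
          Quot (fun f g : {f : Q → Q // IsQuandleAut op f} => ConstBiquandleIso op f.1 g.1),
      ∀ f, e (Quot.mk _ f) = Quot.mk _ f := by
  have iso_iff_conj : ∀ f g : {f : Q → Q // IsQuandleAut op f},
      ConstBiquandleIso op f.1 g.1 ↔ ConjugateAut op f.1 g.1 :=
    fun _ g => constBiquandleIso_iff_conjugateAut g.2.1.1
  exact ⟨iso_iff_conj, Quot.congrRight fun f g => (iso_iff_conj f g).symm, fun _ => rfl⟩

/-- For quandle automorphisms `f`, `g` of a quandle `Q = (X, *)`, the
biquandles `X_f` and `X_g` defined by the constant biquandle structures are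
isomorphic iff `f` and `g` are conjugate in `Aut(Q)`; consequently
`f ↦ X_f` induces a bijection between the conjugacy classes of `Aut(Q)` and
the isomorphism classes of biquandles given by constant biquandle structures
on `Q`. -/
theorem constant_structures_conjugacy {Q : Type*} (op : Q → Q → Q) (hQ : IsQuandle op) :
    (∀ f g : {f : Q → Q // IsQuandleAut op f},
        ConstBiquandleIso op f.1 g.1 ↔ ConjugateAut op f.1 g.1) ∧
    ∃ e : Quot (fun f g : {f : Q → Q // IsQuandleAut op f} => ConjugateAut op f.1 g.1) ≃
          Quot (fun f g : {f : Q → Q // IsQuandleAut op f} => ConstBiquandleIso op f.1 g.1),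
      ∀ f, e (Quot.mk _ f) = Quot.mk _ f :=
  constant_structures_conjugacy_general op
end

section
/- Let B be the biquandle defined by a biquandle structure {β_y : y ∈ X} on a quandle Q = (X, *). If F is a biquandle automorphism of B, then F is a quandle automorphism of Q and F ∘ β_y ∘ F^{-1} = β_{F(y)} for every y ∈ X; in particular, the automorphism group Aut(B) is a subgroup of the normalizer of the set {β_y : y ∈ X} in Aut(Q). -/
section BiquandleAut

variable {X : Type*} {op : X → X → X} {β : X → X → X} {F : X → X}

theorem map_op_of_map_biquandle_ops (hβ : ∀ y, Function.Injective (β y))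
    (hFu : ∀ x y, F (β y (op x y)) = β (F y) (op (F x) (F y)))
    (hFo : ∀ x y, F (β y x) = β (F y) (F x)) (x y : X) :
    F (op x y) = op (F x) (F y) :=
  hβ (F y) <| (hFo _ _).symm.trans (hFu x y)

theorem comp_beta_comp_eq {Finv : X → X} (hR : Function.RightInverse Finv F)
    (hFo : ∀ x y, F (β y x) = β (F y) (F x)) (y : X) :
    F ∘ β y ∘ Finv = β (F y) := by
  funext x
  simp only [Function.comp_apply, hFo, hR x]

end BiquandleAut

theorem image_range_eq_range_of_comp_eq {ι α : Type*} {f : ι → α} {σ : ι → ι} (c : α → α)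
    (hσ : Function.Surjective σ) (hc : ∀ i, c (f i) = f (σ i)) :
    c '' Set.range f = Set.range f := by
  rw [← Set.range_comp, show c ∘ f = f ∘ σ from funext hc, hσ.range_comp]

theorem aut_le_normalizer_general {X : Type*} (op : X → X → X) (β : X → X → X)
    (hβ : IsBiquandleStructure op β)
    (F Finv : X → X) (hFinv : Function.LeftInverse Finv F ∧ Function.RightInverse Finv F)
    (hFu : ∀ x y, F (β y (op x y)) = β (F y) (op (F x) (F y)))
    (hFo : ∀ x y, F (β y x) = β (F y) (F x)) :
    (Function.Bijective F ∧ ∀ x y, F (op x y) = op (F x) (F y)) ∧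
    (∀ y, F ∘ β y ∘ Finv = β (F y)) ∧
    (fun g : X → X => F ∘ g ∘ Finv) '' Set.range β = Set.range β := by
  obtain ⟨hL, hR⟩ := hFinv
  have conj := comp_beta_comp_eq hR hFo
  exact ⟨⟨⟨hL.injective, hR.surjective⟩,
      map_op_of_map_biquandle_ops (fun y => (hβ.beta_bij y).injective) hFu hFo⟩,
    conj, image_range_eq_range_of_comp_eq _ hR.surjective conj⟩

/-- Let `B` be the biquandle defined by a biquandle structure `β` on the
quandle `Q = (X, op)` (operations `x ⊳ y = β_y(x * y)`, `x ⊲ y = β_y(x)`).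
If `F` (with inverse `F⁻¹ = Finv`) is a biquandle automorphism of `B`, then
`F` is a quandle automorphism of `Q`, and `F ∘ β_y ∘ F⁻¹ = β_{F(y)}` for
every `y`; in particular conjugation by `F` maps the set `{β_y | y ∈ X}`
onto itself, so `Aut(B)` is a subgroup of the normalizer of `{β_y | y ∈ X}`
in `Aut(Q)`. -/
theorem aut_le_normalizer {X : Type*} (op : X → X → X) (β : X → X → X)
    (hQ : IsQuandle op) (hβ : IsBiquandleStructure op β)
    (F Finv : X → X) (hFinv : Function.LeftInverse Finv F ∧ Function.RightInverse Finv F)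
    (hF : Function.Bijective F)
    (hFu : ∀ x y, F (β y (op x y)) = β (F y) (op (F x) (F y)))
    (hFo : ∀ x y, F (β y x) = β (F y) (F x)) :
    (Function.Bijective F ∧ ∀ x y, F (op x y) = op (F x) (F y)) ∧
    (∀ y, F ∘ β y ∘ Finv = β (F y)) ∧
    (fun g : X → X => F ∘ g ∘ Finv) '' Set.range β = Set.range β :=
  aut_le_normalizer_general op β hβ F Finv hFinv hFu hFo
end

section
/- Let Q = (X, *) be a quandle, let f be a quandle automorphism of Q, and let X_f be the biquandle defined by the constant biquandle structure β_y = f for all y ∈ X. Then a map F : X → X is a biquandle automorphism of X_f if and only if F is a quandle automorphism of Q with F ∘ f = f ∘ F; consequently Aut(X_f) is isomorphic as a group to the centralizer of f in Aut(Q). -/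
/-- The permutations of `X` preserving a binary operation `op`, as a subgroup
of `Equiv.Perm X`. For a quandle `(X, op)` this is its automorphism group
`Aut(X, op)`. -/
def opAutSubgroup {X : Type*} (op : X → X → X) : Subgroup (Equiv.Perm X) where
  carrier := {F : Equiv.Perm X | ∀ x y, F (op x y) = op (F x) (F y)}
  one_mem' := fun _ _ => rfl
  mul_mem' := by
    intro a b ha hb x y
    simp only [Equiv.Perm.coe_mul, Function.comp_apply]
    rw [hb, ha]
  inv_mem' := by
    intro a ha x y
    have h := ha (a⁻¹ x) (a⁻¹ y)
    simp only [Equiv.Perm.inv_def, Equiv.apply_symm_apply] at h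
    rw [← h, Equiv.Perm.inv_def, Equiv.symm_apply_apply]

section

variable {X : Type*}

theorem map_comp_op_iff_of_commute (op : X → X → X) {f F : X → X} (hf : Function.Injective f)
    (hFf : ∀ x, F (f x) = f (F x)) :
    (∀ x y, F (f (op x y)) = f (op (F x) (F y))) ↔ ∀ x y, F (op x y) = op (F x) (F y) := by
  simp only [hFf, hf.eq_iff]

theorem map_comp_op_and_commute_iff (op : X → X → X) {f : X → X} (hf : Function.Injective f)
    (F : X → X) :
    ((∀ x y, F (f (op x y)) = f (op (F x) (F y))) ∧ ∀ x, F (f x) = f (F x)) ↔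
      (∀ x y, F (op x y) = op (F x) (F y)) ∧ F ∘ f = f ∘ F := by
  rw [funext_iff]
  exact and_congr_left (map_comp_op_iff_of_commute op hf)

theorem opAutSubgroup_const_eq_centralizer (f : Equiv.Perm X) :
    opAutSubgroup (fun x (_ : X) => f x) = Subgroup.centralizer {f} := by
  ext F
  rw [Subgroup.mem_centralizer_singleton_iff, Equiv.Perm.ext_iff]
  exact ⟨fun h x => h x x, fun h x _ => h x⟩

theorem opAutSubgroup_comp_inf_const_eq (op : X → X → X) (f : Equiv.Perm X) :
    opAutSubgroup (fun x y => f (op x y)) ⊓ opAutSubgroup (fun x (_ : X) => f x) =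
      opAutSubgroup op ⊓ Subgroup.centralizer {f} := by
  ext F
  rw [Subgroup.mem_inf, Subgroup.mem_inf, ← opAutSubgroup_const_eq_centralizer]
  exact and_congr_left fun hFf => map_comp_op_iff_of_commute op f.injective fun x => hFf x x

end

theorem aut_constant_eq_centralizer_general {X : Type*} (op : X → X → X)
    (f : Equiv.Perm X) :
    (∀ F : X → X,
      (Function.Bijective F ∧ (∀ x y, F (f (op x y)) = f (op (F x) (F y))) ∧
        (∀ x, F (f x) = f (F x))) ↔
      (Function.Bijective F ∧ (∀ x y, F (op x y) = op (F x) (F y)) ∧ F ∘ f = f ∘ F)) ∧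
    Nonempty
      ((opAutSubgroup (fun x y => f (op x y)) ⊓ opAutSubgroup (fun x _ => f x) :
          Subgroup (Equiv.Perm X)) ≃*
        (opAutSubgroup op ⊓ Subgroup.centralizer {f} : Subgroup (Equiv.Perm X))) := by
  exact ⟨fun F => and_congr_right fun _ => map_comp_op_and_commute_iff op f.injective F,
    ⟨MulEquiv.subgroupCongr (opAutSubgroup_comp_inf_const_eq op f)⟩⟩

/-- Let `f` be a quandle automorphism of the quandle `Q = (X, op)` and `X_f`
the biquandle given by the constant biquandle structure `β_y = f`, with
operations `x ⊳ y = f(x * y)` and `x ⊲ y = f(x)`. Then `F : X → X` is a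
biquandle automorphism of `X_f` iff `F` is a quandle automorphism of `Q`
commuting with `f`; consequently `Aut(X_f)` — the subgroup of `Equiv.Perm X`
of permutations preserving both biquandle operations — is isomorphic as a
group to the centralizer of `f` in `Aut(Q)`. -/
theorem aut_constant_eq_centralizer {X : Type*} (op : X → X → X) (hQ : IsQuandle op)
    (f : Equiv.Perm X) (hf : ∀ x y, f (op x y) = op (f x) (f y)) :
    (∀ F : X → X,
      (Function.Bijective F ∧ (∀ x y, F (f (op x y)) = f (op (F x) (F y))) ∧
        (∀ x, F (f x) = f (F x))) ↔
      (Function.Bijective F ∧ (∀ x y, F (op x y) = op (F x) (F y)) ∧ F ∘ f = f ∘ F)) ∧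
    Nonempty
      ((opAutSubgroup (fun x y => f (op x y)) ⊓ opAutSubgroup (fun x _ => f x) :
          Subgroup (Equiv.Perm X)) ≃*
        (opAutSubgroup op ⊓ Subgroup.centralizer {f} : Subgroup (Equiv.Perm X))) :=
  aut_constant_eq_centralizer_general op f
end

section
/- Let R be a commutative ring, let t and s be units of R, and let M be an R-module carrying the Alexander biquandle operations x ⊳ y = t·x + (s - t)·y and x ⊲ y = s·x, whose underlying quandle Q(M) has operation x * y = (s^{-1}t)·x + (1 - s^{-1}t)·y. Then a map F : M → M is a biquandle automorphism of the Alexander biquandle if and only if F is a quandle automorphism of Q(M) satisfying F(s·x) = s·F(x) for all x ∈ M; consequently Aut(M) is isomorphic as a group to the centralizer of the map x ↦ s·x in Aut(Q(M)). -/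
/-- Multiplication by a unit `s` as a permutation of the module `M`. -/
def smulPerm {R : Type*} [CommRing R] (M : Type*) [AddCommGroup M] [Module R M]
    (s : Rˣ) : Equiv.Perm M where
  toFun x := (s : R) • x
  invFun x := ((s⁻¹ : Rˣ) : R) • x
  left_inv x := by simp [smul_smul]
  right_inv x := by simp [smul_smul]

/-! A map commuting with `x ↦ s·x` preserves `x ⊳ y` iff it preserves `x * y`, because
`x ⊳ y = s·(x * y)` and multiplication by the unit `s` is injective. The two automorphism
groups are then literally the same subgroup of `Equiv.Perm M`. -/

theorem mem_opAutSubgroup_iff {X : Type*} (op : X → X → X) (F : Equiv.Perm X) :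
    F ∈ opAutSubgroup op ↔ ∀ x y, F (op x y) = op (F x) (F y) :=
  Iff.rfl

theorem forall_map_smul_op_iff {R X : Type*} [Monoid R] [MulAction R X] {u : R}
    (hu : IsUnit u) (op : X → X → X) {F : X → X} (hF : ∀ x, F (u • x) = u • F x) :
    (∀ x y, F (u • op x y) = u • op (F x) (F y)) ↔ ∀ x y, F (op x y) = op (F x) (F y) :=
  forall₂_congr fun x y => by rw [hF, hu.smul_left_cancel]

section Alexander

variable {R : Type*} [CommRing R] {M : Type*} [AddCommGroup M] [Module R M]

theorem alexander_biquandle_op_eq_smul_quandle_op (t s : Rˣ) (x y : M) :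
    (t : R) • x + ((s : R) - (t : R)) • y =
      (s : R) • (((s⁻¹ * t : Rˣ) : R) • x + (1 - ((s⁻¹ * t : Rˣ) : R)) • y) := by
  rw [smul_add, smul_smul, smul_smul, Units.val_mul, mul_sub, mul_one,
    Units.mul_inv_cancel_left]

theorem mem_opAutSubgroup_smul_left_iff (s : Rˣ) (F : Equiv.Perm M) :
    F ∈ opAutSubgroup (fun x _ : M => (s : R) • x) ↔ ∀ x, F ((s : R) • x) = (s : R) • F x :=
  ⟨fun h x => h x x, fun h x _ => h x⟩

theorem mem_centralizer_smulPerm_iff (s : Rˣ) (F : Equiv.Perm M) :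
    F ∈ Subgroup.centralizer {smulPerm M s} ↔ ∀ x, F ((s : R) • x) = (s : R) • F x := by
  rw [Subgroup.mem_centralizer_singleton_iff, Equiv.ext_iff]
  rfl

theorem alexander_biquandle_hom_iff_quandle_hom (t s : Rˣ) {F : M → M}
    (hF : ∀ x, F ((s : R) • x) = (s : R) • F x) :
    (∀ x y, F ((t : R) • x + ((s : R) - (t : R)) • y) =
        (t : R) • F x + ((s : R) - (t : R)) • F y) ↔
      ∀ x y, F (((s⁻¹ * t : Rˣ) : R) • x + (1 - ((s⁻¹ * t : Rˣ) : R)) • y) =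
        ((s⁻¹ * t : Rˣ) : R) • F x + (1 - ((s⁻¹ * t : Rˣ) : R)) • F y := by
  simp only [alexander_biquandle_op_eq_smul_quandle_op t s]
  exact forall_map_smul_op_iff s.isUnit
    (fun x y : M => ((s⁻¹ * t : Rˣ) : R) • x + (1 - ((s⁻¹ * t : Rˣ) : R)) • y) hF

end Alexander

/-- Let `M` be the Alexander biquandle on an `R`-module (operations
`x ⊳ y = t·x + (s-t)·y`, `x ⊲ y = s·x`) with underlying Alexander quandle
`Q(M)` (operation `x * y = (s⁻¹t)·x + (1 - s⁻¹t)·y`). Then `F : M → M` is a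
biquandle automorphism of `M` iff it is a quandle automorphism of `Q(M)`
with `F(s·x) = s·F(x)` for all `x`; consequently `Aut(M)` is isomorphic as a
group to the centralizer of `x ↦ s·x` in `Aut(Q(M))`. -/
theorem alexander_biquandle_aut (R : Type*) [CommRing R] (M : Type*) [AddCommGroup M]
    [Module R M] (t s : Rˣ) :
    (∀ F : M → M,
      (Function.Bijective F ∧
        (∀ x y, F ((t : R) • x + ((s : R) - (t : R)) • y) =
          (t : R) • F x + ((s : R) - (t : R)) • F y) ∧
        (∀ x, F ((s : R) • x) = (s : R) • F x)) ↔
      (Function.Bijective F ∧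
        (∀ x y, F (((s⁻¹ * t : Rˣ) : R) • x + (1 - ((s⁻¹ * t : Rˣ) : R)) • y) =
          ((s⁻¹ * t : Rˣ) : R) • F x + (1 - ((s⁻¹ * t : Rˣ) : R)) • F y) ∧
        (∀ x, F ((s : R) • x) = (s : R) • F x))) ∧
    Nonempty
      ((opAutSubgroup (fun x y : M => (t : R) • x + ((s : R) - (t : R)) • y) ⊓
          opAutSubgroup (fun x _ : M => (s : R) • x) : Subgroup (Equiv.Perm M)) ≃*
        (opAutSubgroup
            (fun x y : M => ((s⁻¹ * t : Rˣ) : R) • x + (1 - ((s⁻¹ * t : Rˣ) : R)) • y) ⊓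
          Subgroup.centralizer {smulPerm M s} : Subgroup (Equiv.Perm M))) := by
  refine ⟨fun F => and_congr_right fun _ =>
    and_congr_left (alexander_biquandle_hom_iff_quandle_hom t s), ⟨MulEquiv.subgroupCongr ?_⟩⟩
  ext F
  rw [Subgroup.mem_inf, Subgroup.mem_inf, mem_opAutSubgroup_smul_left_iff,
    mem_centralizer_smulPerm_iff, mem_opAutSubgroup_iff, mem_opAutSubgroup_iff]
  exact and_congr_left (alexander_biquandle_hom_iff_quandle_hom t s)
end

section
/- Let R be a commutative ring, let t and s be units of R, and let M and N be R-modules, each carrying the Alexander biquandle operations x ⊳ y = t·x + (s - t)·y and x ⊲ y = s·x. Then M and N are isomorphic as biquandles if and only if there exists a quandle isomorphism F : Q(M) → Q(N) between the underlying Alexander quandles such that F(s·x) = s·F(x) for every x ∈ M. -/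
/-! The biquandle operation is the quandle operation followed by multiplication by the unit `s`:
`t • x + (s - t) • y = s • ((s⁻¹ t) • x + (1 - s⁻¹ t) • y)`. Hence a map commuting with `s • ·`
preserves `⊳` exactly when it preserves `*`, and `⊲` is preserved by hypothesis. -/

section AlexanderBiquandle

variable {R M N : Type*} [CommRing R] [AddCommGroup M] [Module R M] [AddCommGroup N] [Module R N]

theorem smul_alexanderQuandle_eq (t s : Rˣ) (x y : M) :
    (s : R) • (((s⁻¹ * t : Rˣ) : R) • x + (1 - ((s⁻¹ * t : Rˣ) : R)) • y) =
      (t : R) • x + ((s : R) - (t : R)) • y := by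
  have hst : (s : R) * ((s⁻¹ * t : Rˣ) : R) = t := by
    rw [← Units.val_mul, mul_inv_cancel_left]
  rw [smul_add, smul_smul, smul_smul, hst, mul_sub, mul_one, hst]

theorem map_alexanderBiquandle_iff_map_alexanderQuandle {t s : Rˣ} {F : M → N}
    (hs : ∀ x, F ((s : R) • x) = (s : R) • F x) :
    (∀ x y, F ((t : R) • x + ((s : R) - (t : R)) • y) =
        (t : R) • F x + ((s : R) - (t : R)) • F y) ↔
      ∀ x y, F (((s⁻¹ * t : Rˣ) : R) • x + (1 - ((s⁻¹ * t : Rˣ) : R)) • y) =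
        ((s⁻¹ * t : Rˣ) : R) • F x + (1 - ((s⁻¹ * t : Rˣ) : R)) • F y := by
  refine forall₂_congr fun x y => ?_
  rw [← smul_alexanderQuandle_eq t s x y, ← smul_alexanderQuandle_eq t s (F x) (F y), hs,
    s.isUnit.smul_left_cancel]

end AlexanderBiquandle

/-- Let `M` and `N` be `R`-modules, each carrying the Alexander biquandle
operations `x ⊳ y = t·x + (s-t)·y` and `x ⊲ y = s·x` for units `t, s` of the
commutative ring `R`. Then `M` and `N` are isomorphic as biquandles iff there
is a quandle isomorphism `F : Q(M) → Q(N)` between the underlying Alexander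
quandles (with operation `x * y = (s⁻¹t)·x + (1 - s⁻¹t)·y`) such that
`F(s·x) = s·F(x)` for every `x ∈ M`. -/
theorem alexander_biquandle_iso_iff (R : Type*) [CommRing R]
    (M : Type*) [AddCommGroup M] [Module R M]
    (N : Type*) [AddCommGroup N] [Module R N] (t s : Rˣ) :
    (∃ F : M → N, Function.Bijective F ∧
        (∀ x y, F ((t : R) • x + ((s : R) - (t : R)) • y) =
          (t : R) • F x + ((s : R) - (t : R)) • F y) ∧
        (∀ x, F ((s : R) • x) = (s : R) • F x)) ↔
    (∃ F : M → N, Function.Bijective F ∧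
        (∀ x y, F (((s⁻¹ * t : Rˣ) : R) • x + (1 - ((s⁻¹ * t : Rˣ) : R)) • y) =
          ((s⁻¹ * t : Rˣ) : R) • F x + (1 - ((s⁻¹ * t : Rˣ) : R)) • F y) ∧
        (∀ x, F ((s : R) • x) = (s : R) • F x)) :=
  exists_congr fun _ => and_congr_right fun _ =>
    and_congr_left map_alexanderBiquandle_iff_map_alexanderQuandle
end

section
/- Let n be a positive integer, let s be a unit of Z_n such that s + 1 is also a unit of Z_n, and let B_n be the dihedral biquandle on Z_n with operations i ⊳ j = (s+1)j - i and i ⊲ j = s·i. Then a map g : Z_n → Z_n is a biquandle automorphism of B_n if and only if there exist a unit a of Z_n and b ∈ Z_n with (s-1)b = 0 such that g(i) = a·i + b for all i; consequently Aut(B_n) is isomorphic as a group to the centralizer of the map i ↦ s·i in the affine group Aff(Z_n), which equals {f_{a,b} : a a unit of Z_n, (s-1)b = 0}. -/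
/-- The affine group `Aff(ℤ/nℤ) = {i ↦ a·i + b | a ∈ (ℤ/nℤ)ˣ, b ∈ ℤ/nℤ}`,
as a subgroup of `Equiv.Perm (ZMod n)`. -/
def affSubgroup (n : ℕ) : Subgroup (Equiv.Perm (ZMod n)) where
  carrier := {g | ∃ a : (ZMod n)ˣ, ∃ b : ZMod n, ∀ i, g i = (a : ZMod n) * i + b}
  one_mem' := ⟨1, 0, by simp⟩
  mul_mem' := by
    rintro g h ⟨a, b, hg⟩ ⟨c, d, hh⟩
    refine ⟨a * c, (a : ZMod n) * d + b, fun i => ?_⟩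
    simp only [Equiv.Perm.coe_mul, Function.comp_apply, hh, hg, Units.val_mul]
    ring
  inv_mem' := by
    rintro g ⟨a, b, hg⟩
    refine ⟨a⁻¹, -(((a⁻¹ : (ZMod n)ˣ) : ZMod n) * b), fun i => ?_⟩
    apply g.injective
    rw [Equiv.Perm.inv_def, Equiv.apply_symm_apply, hg]
    symm
    have h1 : (a : ZMod n) * ((a⁻¹ : (ZMod n)ˣ) : ZMod n) = 1 := Units.mul_inv a
    calc (a : ZMod n) * (((a⁻¹ : (ZMod n)ˣ) : ZMod n) * i +
            -(((a⁻¹ : (ZMod n)ˣ) : ZMod n) * b)) + b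
        = ((a : ZMod n) * ((a⁻¹ : (ZMod n)ˣ) : ZMod n)) * i -
            ((a : ZMod n) * ((a⁻¹ : (ZMod n)ˣ) : ZMod n)) * b + b := by ring
      _ = i := by rw [h1]; ring

/-- Multiplication by a unit `s`, as a permutation of `ℤ/nℤ`. -/
def mulPerm (n : ℕ) (s : (ZMod n)ˣ) : Equiv.Perm (ZMod n) where
  toFun i := (s : ZMod n) * i
  invFun i := ((s⁻¹ : (ZMod n)ˣ) : ZMod n) * i
  left_inv i := by simp [← mul_assoc, Units.inv_mul]
  right_inv i := by simp [← mul_assoc, Units.mul_inv]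

open Function

section Affine

variable {R : Type*} [CommRing R] {g : R → R} {a b s : R}

lemma map_sub_sub_map_zero_of_dihedral (hs : IsUnit (s + 1))
    (hg : ∀ i j, g ((s + 1) * j - i) = (s + 1) * g j - g i) (x y : R) :
    g (x - y) - g 0 = (g x - g 0) - (g y - g 0) := by
  obtain ⟨j, rfl⟩ := hs.dvd (a := x)
  have hxy := hg y j
  have hx := hg 0 j
  rw [sub_zero] at hx
  linear_combination hxy - hx

lemma isUnit_of_surjective_of_affine (hg : ∀ x, g x = a * x + b) (hsurj : Surjective g) :
    IsUnit a := by
  obtain ⟨x, hx⟩ := hsurj (1 + b)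
  exact IsUnit.of_mul_eq_one x (by linear_combination (hg x).symm.trans hx)

lemma bijective_of_affine {u : Rˣ} (hg : ∀ x, g x = u * x + b) : Bijective g := by
  rw [show g = (Units.mulLeft u).trans (Equiv.addRight b) from funext hg]
  exact Equiv.bijective _

lemma affine_comm_mul_iff (hg : ∀ x, g x = a * x + b) :
    (∀ i, g (s * i) = s * g i) ↔ (s - 1) * b = 0 := by
  simp only [hg]
  refine ⟨fun h => ?_, fun h i => by linear_combination -h⟩
  linear_combination -(h 0)

lemma affine_dihedral_law (hg : ∀ x, g x = a * x + b) (hb : (s - 1) * b = 0) (i j : R) :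
    g ((s + 1) * j - i) = (s + 1) * g j - g i := by
  simp only [hg]
  linear_combination -hb

end Affine

lemma ZMod.map_eq_mul_of_map_sub {n : ℕ} {h : ZMod n → ZMod n}
    (hh : ∀ x y, h (x - y) = h x - h y) (x : ZMod n) : h x = h 1 * x := by
  obtain ⟨k, rfl⟩ := ZMod.intCast_surjective x
  have := map_zsmul (AddMonoidHom.ofMapSub h hh) k 1
  simp only [zsmul_eq_mul, mul_one] at this
  exact this.trans (mul_comm _ _)

lemma dihedral_aut_iff_affine {n : ℕ} {s : ZMod n} (hs : IsUnit (s + 1)) (g : ZMod n → ZMod n) :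
    (Bijective g ∧ (∀ i j, g ((s + 1) * j - i) = (s + 1) * g j - g i) ∧
        ∀ i, g (s * i) = s * g i) ↔
      ∃ a : (ZMod n)ˣ, ∃ b : ZMod n, (s - 1) * b = 0 ∧ ∀ i, g i = a * i + b := by
  constructor
  · rintro ⟨hbij, hlaw, hmul⟩
    have hlin : ∀ x, g x = (g 1 - g 0) * x + g 0 := fun x => by
      linear_combination ZMod.map_eq_mul_of_map_sub (h := fun x => g x - g 0)
        (map_sub_sub_map_zero_of_dihedral hs hlaw) x
    obtain ⟨a, ha⟩ := isUnit_of_surjective_of_affine hlin hbij.2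
    exact ⟨a, g 0, (affine_comm_mul_iff hlin).1 hmul, ha ▸ hlin⟩
  · rintro ⟨a, b, hb, hg⟩
    exact ⟨bijective_of_affine hg, affine_dihedral_law hg hb, (affine_comm_mul_iff hg).2 hb⟩

lemma mem_centralizer_mulPerm_iff {n : ℕ} {s : (ZMod n)ˣ} {F : Equiv.Perm (ZMod n)} :
    F ∈ Subgroup.centralizer {mulPerm n s} ↔ ∀ i, F (s * i) = s * F i :=
  Subgroup.mem_centralizer_singleton_iff.trans Equiv.ext_iff

lemma mem_affSubgroup_inf_centralizer_mulPerm_iff {n : ℕ} {s : (ZMod n)ˣ}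
    {F : Equiv.Perm (ZMod n)} :
    F ∈ affSubgroup n ⊓ Subgroup.centralizer {mulPerm n s} ↔
      ∃ a : (ZMod n)ˣ, ∃ b : ZMod n, ((s : ZMod n) - 1) * b = 0 ∧ ∀ i, F i = a * i + b := by
  rw [Subgroup.mem_inf, mem_centralizer_mulPerm_iff]
  constructor
  · rintro ⟨⟨a, b, hF⟩, hmul⟩
    exact ⟨a, b, (affine_comm_mul_iff hF).1 hmul, hF⟩
  · rintro ⟨a, b, hb, hF⟩
    exact ⟨⟨a, b, hF⟩, (affine_comm_mul_iff hF).2 hb⟩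

lemma mem_dihedral_opAutSubgroup_iff {n : ℕ} {s : ZMod n} (hs : IsUnit (s + 1))
    {F : Equiv.Perm (ZMod n)} :
    F ∈ opAutSubgroup (fun i j : ZMod n => (s + 1) * j - i) ⊓
        opAutSubgroup (fun i _ : ZMod n => s * i) ↔
      ∃ a : (ZMod n)ˣ, ∃ b : ZMod n, (s - 1) * b = 0 ∧ ∀ i, F i = a * i + b := by
  rw [Subgroup.mem_inf, ← dihedral_aut_iff_affine hs]
  exact ⟨fun ⟨hlaw, hmul⟩ => ⟨F.bijective, hlaw, fun i => hmul i 0⟩,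
    fun ⟨_, hlaw, hmul⟩ => ⟨hlaw, fun i _ => hmul i⟩⟩

theorem dihedral_biquandle_aut_general (n : ℕ) (s : (ZMod n)ˣ)
    (hs1 : IsUnit ((s : ZMod n) + 1)) :
    (∀ g : ZMod n → ZMod n,
      (Function.Bijective g ∧
        (∀ i j, g (((s : ZMod n) + 1) * j - i) = ((s : ZMod n) + 1) * g j - g i) ∧
        (∀ i, g ((s : ZMod n) * i) = (s : ZMod n) * g i)) ↔
      (∃ a : (ZMod n)ˣ, ∃ b : ZMod n, ((s : ZMod n) - 1) * b = 0 ∧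
        ∀ i, g i = (a : ZMod n) * i + b)) ∧
    Nonempty
      ((opAutSubgroup (fun i j : ZMod n => ((s : ZMod n) + 1) * j - i) ⊓
          opAutSubgroup (fun i _ : ZMod n => (s : ZMod n) * i) :
            Subgroup (Equiv.Perm (ZMod n))) ≃*
        (affSubgroup n ⊓ Subgroup.centralizer {mulPerm n s} :
            Subgroup (Equiv.Perm (ZMod n)))) ∧
    ((affSubgroup n ⊓ Subgroup.centralizer {mulPerm n s} :
        Subgroup (Equiv.Perm (ZMod n))) : Set (Equiv.Perm (ZMod n))) =
      {g : Equiv.Perm (ZMod n) | ∃ a : (ZMod n)ˣ, ∃ b : ZMod n,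
        ((s : ZMod n) - 1) * b = 0 ∧ ∀ i, g i = (a : ZMod n) * i + b} := by
  have hsame : opAutSubgroup (fun i j : ZMod n => ((s : ZMod n) + 1) * j - i) ⊓
        opAutSubgroup (fun i _ : ZMod n => (s : ZMod n) * i) =
      affSubgroup n ⊓ Subgroup.centralizer {mulPerm n s} :=
    Subgroup.ext fun _ => (mem_dihedral_opAutSubgroup_iff hs1).trans
      mem_affSubgroup_inf_centralizer_mulPerm_iff.symm
  exact ⟨dihedral_aut_iff_affine hs1, ⟨MulEquiv.subgroupCongr hsame⟩,
    Set.ext fun _ => mem_affSubgroup_inf_centralizer_mulPerm_iff⟩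

/-- Let `n` be positive, `s` a unit of `ℤ/nℤ` with `s + 1` also a unit, and
`B_n` the dihedral biquandle (`i ⊳ j = (s+1)j - i`, `i ⊲ j = s·i`). A map
`g : ℤ/nℤ → ℤ/nℤ` is a biquandle automorphism of `B_n` iff `g = f_{a,b}`
for some unit `a` and some `b` with `(s-1)b = 0`; consequently `Aut(B_n)` is
isomorphic as a group to the centralizer of `i ↦ s·i` in `Aff(ℤ/nℤ)`, which
equals `{f_{a,b} | a ∈ (ℤ/nℤ)ˣ, (s-1)b = 0}`. -/
theorem dihedral_biquandle_aut (n : ℕ) (hn : 0 < n) (s : (ZMod n)ˣ)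
    (hs1 : IsUnit ((s : ZMod n) + 1)) :
    (∀ g : ZMod n → ZMod n,
      (Function.Bijective g ∧
        (∀ i j, g (((s : ZMod n) + 1) * j - i) = ((s : ZMod n) + 1) * g j - g i) ∧
        (∀ i, g ((s : ZMod n) * i) = (s : ZMod n) * g i)) ↔
      (∃ a : (ZMod n)ˣ, ∃ b : ZMod n, ((s : ZMod n) - 1) * b = 0 ∧
        ∀ i, g i = (a : ZMod n) * i + b)) ∧
    Nonempty
      ((opAutSubgroup (fun i j : ZMod n => ((s : ZMod n) + 1) * j - i) ⊓
          opAutSubgroup (fun i _ : ZMod n => (s : ZMod n) * i) :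
            Subgroup (Equiv.Perm (ZMod n))) ≃*
        (affSubgroup n ⊓ Subgroup.centralizer {mulPerm n s} :
            Subgroup (Equiv.Perm (ZMod n)))) ∧
    ((affSubgroup n ⊓ Subgroup.centralizer {mulPerm n s} :
        Subgroup (Equiv.Perm (ZMod n))) : Set (Equiv.Perm (ZMod n))) =
      {g : Equiv.Perm (ZMod n) | ∃ a : (ZMod n)ˣ, ∃ b : ZMod n,
        ((s : ZMod n) - 1) * b = 0 ∧ ∀ i, g i = (a : ZMod n) * i + b} :=
  dihedral_biquandle_aut_general n s hs1
end

section
/- Let (Q, *) and (K, ∘) be quandles. Then the operations (x,a) ⊳ (y,b) = (x * y, a) and (x,a) ⊲ (y,b) = (x, a ∘ b) make the cartesian product Q × K a biquandle (the product biquandle). -/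
/-! The only non-componentwise axiom is the bijectivity of the switch map `S`. After regrouping
`((x,a),(y,b))` as `((x,y),(a,b))`, it acts on the two factors separately, as
`(x,y) ↦ (y, x * y)` on `Q × Q` and `(a,b) ↦ (b ∘ a, a)` on `K × K`; both are bijective because
right multiplications in a quandle are. -/

open Function

theorem bijective_snd_op_of_right_bijective {α : Type*} {op : α → α → α}
    (h : ∀ y, Bijective (fun x => op x y)) :
    Bijective (fun p : α × α => (p.2, op p.1 p.2)) :=
  ((Equiv.prodComm α α).trans
    (Equiv.prodShear (Equiv.refl α) fun y => Equiv.ofBijective _ (h y))).bijective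

theorem bijective_op_swap_fst_of_right_bijective {α : Type*} {op : α → α → α}
    (h : ∀ y, Bijective (fun x => op x y)) :
    Bijective (fun p : α × α => (op p.2 p.1, p.1)) :=
  Prod.swap_bijective.comp ((bijective_snd_op_of_right_bijective h).comp Prod.swap_bijective)

/-- For quandles `(Q, *)` and `(K, ∘)`, the operations
`(x,a) ⊳ (y,b) = (x * y, a)` and `(x,a) ⊲ (y,b) = (x, a ∘ b)` make `Q × K`
a biquandle (the product biquandle). -/
theorem product_biquandle {Q K : Type*} (qop : Q → Q → Q) (kop : K → K → K)
    (hQ : IsQuandle qop) (hK : IsQuandle kop) :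
    IsBiquandle (fun p q : Q × K => (qop p.1 q.1, p.2))
      (fun p q : Q × K => (p.1, kop p.2 q.2)) := by
  refine
    { diag := fun x => by simp only [hQ.idem, hK.idem]
      alpha_bij := fun y => (hQ.right_bij y.1).prodMap bijective_id
      beta_bij := fun y => bijective_id.prodMap (hK.right_bij y.2)
      S_bij := ?_
      exchange₁ := fun x y z => by rw [hQ.self_distrib x.1 z.1 y.1]
      exchange₂ := fun _ _ _ => rfl
      exchange₃ := fun x y z => by rw [hK.self_distrib x.2 z.2 y.2] }
  exact (Equiv.prodProdProdComm Q Q K K).bijective.comp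
    (((bijective_snd_op_of_right_bijective hQ.right_bij).prodMap
      (bijective_op_swap_fst_of_right_bijective hK.right_bij)).comp
        (Equiv.prodProdProdComm Q K Q K).bijective)
end
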